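/- For every R-module M, the module L_0^I M is L_0^I-complete, and for every L_0^I-complete R-module N, precomposition with η_M : M → L_0^I M gives a bijection Hom_R(L_0^I M, N) ≅ Hom_R(M, N). That is, L_0^I is left adjoint to the inclusion of the full subcategory of L_0^I-complete R-modules into R-modules. -/

import Mathlib

/-!
# Core definitions

For a commutative ring `R` and an ideal `I`, we construct the zeroth left derived
functor `L0 I` of the `I`-adic completion functor on `R`-modules, computed via the
canonical free presentation `(ker ε →₀ R) → (M →₀ R) → M → 0` of a module `M`
(the zeroth left derived functor of an additive functor `F` is
`coker (F P₁ → F P₀)` for any projective presentation `P₁ → P₀ → M → 0`),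
together with the canonical natural map `η : M → L0 I M`.  A module is
`L0`-complete iff `η` is an isomorphism.
-/

open AdicCompletion

noncomputable section

namespace LComplete

variable {R : Type} [CommRing R]

variable (R) in
/-- The augmentation `(M →₀ R) → M` of the canonical free presentation of `M`. -/
def eps (M : Type) [AddCommGroup M] [Module R M] : (M →₀ R) →ₗ[R] M :=
  Finsupp.linearCombination R id

lemma eps_surjective (M : Type) [AddCommGroup M] [Module R M] :
    Function.Surjective (eps R M) := fun m =>
  ⟨Finsupp.single m 1, by simp [eps]⟩

variable (R) in
/-- The first differential of the canonical free presentation of `M`. -/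
def d1 (M : Type) [AddCommGroup M] [Module R M] :
    ((LinearMap.ker (eps R M)) →₀ R) →ₗ[R] (M →₀ R) :=
  Finsupp.linearCombination R Subtype.val

lemma range_d1 (M : Type) [AddCommGroup M] [Module R M] :
    LinearMap.range (d1 R M) = LinearMap.ker (eps R M) := by
  rw [d1, Finsupp.range_linearCombination, Subtype.range_val, Submodule.span_eq]

variable (I : Ideal R)

/-- The image of the completed presentation map, i.e. the submodule by which one
quotients the completion of `M →₀ R` to obtain `L0 I M`. -/
def L0aux (M : Type) [AddCommGroup M] [Module R M] :
    Submodule R (AdicCompletion I (M →₀ R)) :=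
  LinearMap.range ((AdicCompletion.map I (d1 R M)).restrictScalars R)

/-- The zeroth left derived functor of `I`-adic completion, computed as
`coker((P₁)^∧_I → (P₀)^∧_I)` for the canonical free presentation `P₁ → P₀ → M → 0`. -/
def L0 (M : Type) [AddCommGroup M] [Module R M] : Type _ :=
  AdicCompletion I (M →₀ R) ⧸ L0aux I M

instance (M : Type) [AddCommGroup M] [Module R M] : AddCommGroup (L0 I M) :=
  inferInstanceAs (AddCommGroup (AdicCompletion I (M →₀ R) ⧸ L0aux I M))

instance (M : Type) [AddCommGroup M] [Module R M] : Module R (L0 I M) :=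
  inferInstanceAs (Module R (AdicCompletion I (M →₀ R) ⧸ L0aux I M))

/-- The canonical map `(M →₀ R) → L0 I M`. -/
def etaAux (M : Type) [AddCommGroup M] [Module R M] : (M →₀ R) →ₗ[R] L0 I M :=
  (L0aux I M).mkQ ∘ₗ AdicCompletion.of I (M →₀ R)

/-- Naturality of the completion map. -/
lemma map_of {M N : Type} [AddCommGroup M] [Module R M] [AddCommGroup N] [Module R N]
    (f : M →ₗ[R] N) (x : M) :
    AdicCompletion.map I f (AdicCompletion.of I M x) = AdicCompletion.of I N (f x) := by
  ext n
  rw [AdicCompletion.map_val_apply, AdicCompletion.of_apply, AdicCompletion.of_apply,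
    Submodule.mkQ_apply, Submodule.mkQ_apply, LinearMap.reduceModIdeal_apply]

lemma ker_eps_le_ker_etaAux (M : Type) [AddCommGroup M] [Module R M] :
    LinearMap.ker (eps R M) ≤ LinearMap.ker (etaAux I M) := by
  intro x hx
  rw [← range_d1] at hx
  obtain ⟨y, rfl⟩ := hx
  simp only [LinearMap.mem_ker, etaAux, LinearMap.comp_apply, ← map_of]
  exact (Submodule.Quotient.mk_eq_zero _).mpr ⟨AdicCompletion.of I _ y, rfl⟩

/-- The canonical natural map `η : M → L0 I M`; it sends `x` to the class of the
image in the completion of `(M →₀ R)` of the basis element of `x`. -/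
def eta (M : Type) [AddCommGroup M] [Module R M] : M →ₗ[R] L0 I M where
  toFun x := etaAux I M (Finsupp.single x 1)
  map_add' x y := by
    have h : (Finsupp.single (x + y) (1 : R) - (Finsupp.single x 1 + Finsupp.single y 1)) ∈
        LinearMap.ker (eps R M) := by
      simp [eps]
    have h2 := ker_eps_le_ker_etaAux I M h
    rw [LinearMap.mem_ker, map_sub, map_add, sub_eq_zero] at h2
    exact h2
  map_smul' r x := by
    have h : (Finsupp.single (r • x) (1 : R) - r • Finsupp.single x 1) ∈
        LinearMap.ker (eps R M) := by
      simp [eps]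
    have h2 := ker_eps_le_ker_etaAux I M h
    rw [LinearMap.mem_ker, map_sub, map_smul, sub_eq_zero] at h2
    simpa using h2

/-- A module `M` is `L0`-complete (`L`-complete) if the canonical natural map
`η : M → L0 I M` is an isomorphism. -/
def IsL0Complete (M : Type) [AddCommGroup M] [Module R M] : Prop :=
  Function.Bijective (eta I M)

/-! ## Functoriality of `L0` -/

section Functoriality

variable {M N P : Type} [AddCommGroup M] [Module R M] [AddCommGroup N] [Module R N]
  [AddCommGroup P] [Module R P]

variable (R) in
/-- The induced map on canonical free covers. -/
def fmap0 (f : M →ₗ[R] N) : (M →₀ R) →ₗ[R] (N →₀ R) := Finsupp.lmapDomain R R f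

lemma eps_comp_fmap0 (f : M →ₗ[R] N) : (eps R N) ∘ₗ (fmap0 R f) = f ∘ₗ (eps R M) :=
  Finsupp.lmapDomain_linearCombination R (v := id) (v' := id) ⇑f f (fun _ => rfl)

lemma eps_comp_d1 (M : Type) [AddCommGroup M] [Module R M] :
    (eps R M) ∘ₗ (d1 R M) = 0 := by
  ext y
  have h : d1 R M (Finsupp.single y 1) ∈ LinearMap.range (d1 R M) := ⟨_, rfl⟩
  rw [range_d1] at h
  simpa using h

/-- Key lemma: if a map into the free cover of `N` composes to zero with the
augmentation, then after completion its image lies in `L0aux I N`. -/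
lemma mem_L0aux_of_aug_zero {A : Type} {φ : (A →₀ R) →ₗ[R] (N →₀ R)}
    (hφ : (eps R N) ∘ₗ φ = 0) (z : AdicCompletion I (A →₀ R)) :
    (AdicCompletion.map I φ) z ∈ L0aux I N := by
  have hmem : ∀ a : A, φ (Finsupp.single a 1) ∈ LinearMap.ker (eps R N) := fun a =>
    LinearMap.mem_ker.mpr (LinearMap.congr_fun hφ (Finsupp.single a 1))
  set τ : (A →₀ R) →ₗ[R] ((LinearMap.ker (eps R N)) →₀ R) :=
    Finsupp.linearCombination R
      (fun a => Finsupp.single ⟨φ (Finsupp.single a 1), hmem a⟩ 1) with hτdef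
  have hτ : (d1 R N) ∘ₗ τ = φ := by
    apply Finsupp.lhom_ext
    intro a b
    have h1 : (Finsupp.single a b : A →₀ R) = b • Finsupp.single a 1 := by
      rw [Finsupp.smul_single, smul_eq_mul, mul_one]
    rw [LinearMap.comp_apply, h1, map_smul, map_smul, map_smul]
    congr 1
    simp [hτdef, d1, Finsupp.linearCombination_single]
  have h : AdicCompletion.map I φ z =
      AdicCompletion.map I (d1 R N) (AdicCompletion.map I τ z) := by
    rw [AdicCompletion.map_comp_apply, hτ]
  rw [h]
  exact ⟨AdicCompletion.map I τ z, rfl⟩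

lemma map_add_apply (φ ψ : M →ₗ[R] N) (x : AdicCompletion I M) :
    AdicCompletion.map I (φ + ψ) x =
      AdicCompletion.map I φ x + AdicCompletion.map I ψ x := by
  ext n
  obtain ⟨y, hy⟩ := Submodule.Quotient.mk_surjective _ (x.val n)
  have hval : (AdicCompletion.map I φ x + AdicCompletion.map I ψ x).val n =
      (AdicCompletion.map I φ x).val n + (AdicCompletion.map I ψ x).val n := rfl
  rw [hval, AdicCompletion.map_val_apply, AdicCompletion.map_val_apply,
    AdicCompletion.map_val_apply, ← hy, LinearMap.reduceModIdeal_apply,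
    LinearMap.reduceModIdeal_apply, LinearMap.reduceModIdeal_apply]
  rw [LinearMap.add_apply, Submodule.Quotient.mk_add]

/-- The map induced by `f : M → N` on `L0`. -/
def L0map (f : M →ₗ[R] N) : L0 I M →ₗ[R] L0 I N :=
  Submodule.mapQ (L0aux I M) (L0aux I N)
    ((AdicCompletion.map I (fmap0 R f)).restrictScalars R)
    (by
      rintro z ⟨w, rfl⟩
      show AdicCompletion.map I (fmap0 R f) (AdicCompletion.map I (d1 R M) w) ∈ L0aux I N
      rw [AdicCompletion.map_comp_apply]
      refine mem_L0aux_of_aug_zero I ?_ w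
      rw [← LinearMap.comp_assoc, eps_comp_fmap0, LinearMap.comp_assoc, eps_comp_d1,
        LinearMap.comp_zero])

lemma L0map_mk (f : M →ₗ[R] N) (z : AdicCompletion I (M →₀ R)) :
    L0map I f (Submodule.Quotient.mk z) =
      Submodule.Quotient.mk (AdicCompletion.map I (fmap0 R f) z) :=
  rfl

lemma L0map_id : L0map I (LinearMap.id : M →ₗ[R] M) = LinearMap.id := by
  apply Submodule.linearMap_qext
  refine LinearMap.ext fun z => ?_
  show L0map I LinearMap.id (Submodule.Quotient.mk z) = Submodule.Quotient.mk z
  rw [L0map_mk]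
  congr 1
  have h : fmap0 R (LinearMap.id : M →ₗ[R] M) = LinearMap.id := by
    rw [fmap0, LinearMap.id_coe]
    exact Finsupp.lmapDomain_id R R
  rw [h, AdicCompletion.map_id]
  rfl


lemma map_sub_apply (φ ψ : M →ₗ[R] N) (x : AdicCompletion I M) :
    AdicCompletion.map I (φ - ψ) x =
      AdicCompletion.map I φ x - AdicCompletion.map I ψ x := by
  have h := map_add_apply I (φ - ψ) ψ x
  rw [sub_add_cancel] at h
  rw [h, add_sub_cancel_right]

lemma L0map_comp (f : M →ₗ[R] N) (g : N →ₗ[R] P) :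
    L0map I (g ∘ₗ f) = (L0map I g) ∘ₗ (L0map I f) := by
  apply Submodule.linearMap_qext
  refine LinearMap.ext fun z => ?_
  show L0map I (g ∘ₗ f) (Submodule.Quotient.mk z) =
    L0map I g (L0map I f (Submodule.Quotient.mk z))
  rw [L0map_mk, L0map_mk, L0map_mk, AdicCompletion.map_comp_apply]
  congr 2
  rw [fmap0, fmap0, fmap0, LinearMap.coe_comp, ← Finsupp.lmapDomain_comp]

lemma L0map_add (f g : M →ₗ[R] N) : L0map I (f + g) = L0map I f + L0map I g := by
  apply Submodule.linearMap_qext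
  refine LinearMap.ext fun z => ?_
  show L0map I (f + g) (Submodule.Quotient.mk z) =
    L0map I f (Submodule.Quotient.mk z) + L0map I g (Submodule.Quotient.mk z)
  rw [L0map_mk, L0map_mk, L0map_mk]
  refine Eq.trans ?_ (Submodule.Quotient.mk_add (p := L0aux I N))
  rw [show AdicCompletion.map I (fmap0 R f) z + AdicCompletion.map I (fmap0 R g) z
      = AdicCompletion.map I (fmap0 R f + fmap0 R g) z from (map_add_apply I _ _ z).symm]
  rw [show AdicCompletion.map I (fmap0 R f + fmap0 R g) z =
      AdicCompletion.map I (fmap0 R (f + g)) z +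
        AdicCompletion.map I (fmap0 R f + fmap0 R g - fmap0 R (f + g)) z by
    rw [← map_add_apply I]; congr 1; abel_nf]
  refine Eq.trans ?_ (Submodule.Quotient.mk_add (p := L0aux I N)).symm
  refine left_eq_add.mpr ?_
  refine (Submodule.Quotient.mk_eq_zero (L0aux I N)).mpr ?_
  refine mem_L0aux_of_aug_zero I ?_ z
  rw [LinearMap.comp_sub, LinearMap.comp_add, eps_comp_fmap0, eps_comp_fmap0, eps_comp_fmap0,
    LinearMap.add_comp, sub_eq_zero]

end Functoriality

open CategoryTheory

variable (R) in
/-- `L0` as a functor on the category of `R`-modules. -/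
def L0Functor : ModuleCat R ⥤ ModuleCat R where
  obj M := ModuleCat.of R (L0 I M)
  map {M N} f := ModuleCat.ofHom (L0map I f.hom)
  map_id M := ModuleCat.hom_ext (by
    rw [ModuleCat.hom_ofHom, ModuleCat.hom_id, ModuleCat.hom_id]; exact L0map_id I)
  map_comp {M N P} f g := ModuleCat.hom_ext (L0map_comp I f.hom g.hom)

instance : (L0Functor R I).Additive where
  map_add {M N f g} := ModuleCat.hom_ext (L0map_add I f.hom g.hom)

lemma eta_naturality {M N : Type} [AddCommGroup M] [Module R M] [AddCommGroup N] [Module R N]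
    (f : M →ₗ[R] N) : (eta I N) ∘ₗ f = (L0map I f) ∘ₗ (eta I M) := by
  refine LinearMap.ext fun x => ?_
  show Submodule.Quotient.mk (AdicCompletion.of I (N →₀ R) (Finsupp.single (f x) 1)) =
    L0map I f (Submodule.Quotient.mk (AdicCompletion.of I (M →₀ R) (Finsupp.single x 1)))
  rw [L0map_mk, map_of]
  congr 2
  rw [fmap0]
  simpa using (Finsupp.mapDomain_single (f := ⇑f) (a := x) (b := (1 : R))).symm

section Complexes

variable {ι : Type} (c : ComplexShape ι)

/-- The canonical natural map `η : C → L0 C` of homological complexes, given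
degreewise by `eta`. -/
def etaCx (C : HomologicalComplex (ModuleCat R) c) :
    C ⟶ ((L0Functor R I).mapHomologicalComplex c).obj C where
  f i := ModuleCat.ofHom (eta I (C.X i))
  comm' i j _ := ModuleCat.hom_ext (eta_naturality I (C.d i j).hom).symm

end Complexes

end LComplete



namespace LCAux

variable {R : Type} [CommRing R]

variable (R) in
/-- The map `(f n) ↦ (f n - s • f (n+1))` on sequences. -/
def Tmap (s : R) (N : Type) [AddCommGroup N] [Module R N] : (ℕ → N) →ₗ[R] (ℕ → N) where
  toFun f := fun n => f n - s • f (n + 1)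
  map_add' f g := by
    funext n
    simp only [Pi.add_apply, smul_add]
    abel
  map_smul' r f := by
    funext n
    simp only [Pi.smul_apply, RingHom.id_apply, smul_sub, smul_comm s r]

variable (R) in
/-- `N` is an `s`-contramodule. -/
def Contra (s : R) (N : Type) [AddCommGroup N] [Module R N] : Prop :=
  Function.Bijective (Tmap R s N)

variable {s : R} {N N₁ N₂ : Type} [AddCommGroup N] [Module R N]
  [AddCommGroup N₁] [Module R N₁] [AddCommGroup N₂] [Module R N₂]

lemma Tmap_apply (f : ℕ → N) (n : ℕ) : Tmap R s N f n = f n - s • f (n + 1) := rfl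

lemma contra_of_equiv (e : N₁ ≃ₗ[R] N₂) (h : Contra R s N₁) : Contra R s N₂ := by
  constructor
  · intro f g hfg
    have h1 : Tmap R s N₁ (fun n => e.symm (f n)) = Tmap R s N₁ (fun n => e.symm (g n)) := by
      funext n
      simp only [Tmap_apply, ← map_smul, ← map_sub]
      exact congrArg e.symm (congrFun hfg n)
    have h2 := h.injective h1
    funext n
    have h3 := congrFun h2 n
    simpa using congrArg e h3
  · intro f
    obtain ⟨p, hp⟩ := h.surjective (fun n => e.symm (f n))
    refine ⟨fun n => e (p n), ?_⟩
    funext n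
    have := congrFun hp n
    simp only [Tmap_apply] at this ⊢
    rw [← map_smul, ← map_sub, this]
    simp

lemma contra_quot_range (t : N₁ →ₗ[R] N₂) (h1 : Contra R s N₁) (h2 : Contra R s N₂) :
    Contra R s (N₂ ⧸ LinearMap.range t) := by
  set U := LinearMap.range t with hU
  have key : ∀ f : ℕ → N₂ ⧸ U, ∃ g : ℕ → N₂, ∀ n, U.mkQ (g n) = f n := by
    intro f
    choose g hg using fun n => Submodule.Quotient.mk_surjective U (f n)
    exact ⟨g, hg⟩
  have hcomm : ∀ g : ℕ → N₂,
      Tmap R s _ (fun n => U.mkQ (g n)) = fun n => U.mkQ (Tmap R s N₂ g n) := by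
    intro g
    funext n
    simp [Tmap_apply]
  constructor
  · rw [injective_iff_map_eq_zero]
    intro f hf
    obtain ⟨g, hg⟩ := key f
    have hTg : ∀ n, Tmap R s N₂ g n ∈ U := by
      intro n
      rw [← Submodule.Quotient.mk_eq_zero, ← Submodule.mkQ_apply]
      have e1 := congrFun (hcomm g) n
      rw [← e1]
      have e2 : (fun n => U.mkQ (g n)) = f := funext hg
      rw [e2, hf]
      rfl
    choose y hy using fun n => hTg n
    obtain ⟨z, hz⟩ := h1.surjective y
    have hzero : Tmap R s N₂ (fun n => g n - t (z n)) = 0 := by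
      funext n
      simp only [Tmap_apply, Pi.zero_apply]
      have e1 : g n - s • g (n+1) = t (y n) := (hy n).symm
      have e2 : z n - s • z (n+1) = y n := congrFun hz n
      rw [show g n - t (z n) - s • (g (n+1) - t (z (n+1))) =
        (g n - s • g (n+1)) - (t (z n) - t (s • z (n+1))) by rw [map_smul, smul_sub]; abel]
      rw [e1, ← map_sub, e2]
      simp
    have hgz : (fun n => g n - t (z n)) = 0 := by
      apply h2.injective
      rw [hzero]
      exact (_root_.map_zero _).symm
    funext n
    have e3 := congrFun hgz n
    simp only [Pi.zero_apply, sub_eq_zero] at e3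
    rw [Pi.zero_apply, ← hg n, e3, Submodule.mkQ_apply, Submodule.Quotient.mk_eq_zero]
    exact ⟨z n, rfl⟩
  · intro f
    obtain ⟨g, hg⟩ := key f
    obtain ⟨p, hp⟩ := h2.surjective g
    refine ⟨fun n => U.mkQ (p n), ?_⟩
    rw [hcomm p, hp]
    exact funext hg

variable (I : Ideal R)

lemma smul_quot_zero {n : ℕ} {r : R} (hr : r ∈ I ^ n) {M : Type} [AddCommGroup M] [Module R M]
    (x : M ⧸ (I ^ n • ⊤ : Submodule R M)) : r • x = 0 := by
  obtain ⟨m, rfl⟩ := Submodule.Quotient.mk_surjective _ x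
  rw [← Submodule.Quotient.mk_smul, Submodule.Quotient.mk_eq_zero]
  exact Submodule.smul_mem_smul hr trivial

lemma contra_completion {s : R} (hs : s ∈ I) (M : Type) [AddCommGroup M] [Module R M] :
    Contra R s (AdicCompletion I M) := by
  constructor
  · rw [injective_iff_map_eq_zero]
    intro f hf
    have step : ∀ i, f i = s • f (i + 1) := by
      intro i
      have := congrFun hf i
      simp only [Tmap_apply, Pi.zero_apply, sub_eq_zero] at this
      exact this
    have pow : ∀ i n, f i = s ^ n • f (i + n) := by
      intro i n
      induction n with
      | zero => simp
      | succ n ih => rw [ih, step (i + n), smul_smul, ← pow_succ, ← Nat.add_assoc]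
    funext i
    rw [Pi.zero_apply]
    apply IsHausdorff.haus (inferInstance : IsHausdorff I (AdicCompletion I M))
    intro n
    rw [SModEq.zero, pow i n]
    exact Submodule.smul_mem_smul (Ideal.pow_mem_pow hs n) trivial
  · intro b
    set P : ℕ → ℕ → AdicCompletion I M := fun i n => ∑ j ∈ Finset.range n, s ^ j • b (i + j)
      with hP
    have compat : ∀ i, ∀ {m n : ℕ} (hmn : m ≤ n),
        AdicCompletion.transitionMap I M hmn ((P i n).val n) = (P i m).val m := by
      intro i m n hmn
      rw [transitionMap_comp_eval_apply]
      have key : (P i n - P i m).val m = 0 := by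
        have e1 : P i n - P i m = ∑ j ∈ Finset.Ico m n, s ^ j • b (i + j) := by
          rw [hP]
          simp only
          rw [← Finset.sum_range_add_sum_Ico _ hmn]
          abel
        rw [e1, val_sum_apply]
        apply Finset.sum_eq_zero
        intro j hj
        rw [val_smul_apply]
        exact smul_quot_zero I (Ideal.pow_le_pow_right (Finset.mem_Ico.mp hj).1
          (Ideal.pow_mem_pow hs j)) _
      rw [val_sub_apply, sub_eq_zero] at key
      exact key
    set m : ℕ → AdicCompletion I M := fun i => ⟨fun n => (P i n).val n, fun hmn => compat _ hmn⟩
      with hm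
    refine ⟨m, ?_⟩
    funext i
    apply AdicCompletion.ext
    intro n
    have hval : (Tmap R s _ m i).val n = (P i n).val n - s • (P (i+1) n).val n := rfl
    have hPP : P i n - s • P (i + 1) n = b i - s ^ n • b (i + n) := by
      rw [hP]
      simp only [Finset.smul_sum, smul_smul, ← pow_succ']
      have hre : ∀ x : ℕ, s ^ (x + 1) • b (i + 1 + x) = s ^ (x + 1) • b (i + (x + 1)) := by
        intro x
        have e : i + 1 + x = i + (x + 1) := by omega
        rw [e]
      rw [Finset.sum_congr rfl (fun x _ => hre x)]
      have h1 := Finset.sum_range_succ' (fun j => s ^ j • b (i + j)) n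
      have h2 := Finset.sum_range_succ (fun j => s ^ j • b (i + j)) n
      rw [h2] at h1
      have h3 : ∑ x ∈ Finset.range n, s ^ (x + 1) • b (i + (x + 1)) =
          ∑ j ∈ Finset.range n, s ^ j • b (i + j) + s ^ n • b (i + n) - s ^ 0 • b (i + 0) := by
        rw [eq_sub_iff_add_eq]
        exact h1.symm
      rw [h3]
      simp only [pow_zero, one_smul, Nat.add_zero]
      abel
    have hbn : (b i).val n = (b i - s ^ n • b (i + n)).val n := by
      rw [val_sub_apply, val_smul_apply, smul_quot_zero I (Ideal.pow_mem_pow hs n)]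
      abel
    rw [hval, ← val_smul_apply, ← val_sub_apply, hPP, ← hbn]


section B
variable {R : Type} [CommRing R] (I : Ideal R)
lemma span_smul_expand {k : ℕ} {s : Fin k → R} (hsI : Ideal.span (Set.range s) = I)
    {M : Type} [AddCommGroup M] [Module R M] {Q : Submodule R M} {z : M}
    (hz : z ∈ I • Q) : ∃ c : Fin k → M, (∀ i, c i ∈ Q) ∧ z = ∑ i, s i • c i := by
  refine Submodule.smul_induction_on hz ?_ ?_
  · intro r hr q hq
    rw [← hsI] at hr
    obtain ⟨cc, hcc⟩ := (Finsupp.mem_span_range_iff_exists_finsupp).mp hr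
    refine ⟨fun i => cc i • q, fun i => Q.smul_mem _ hq, ?_⟩
    calc r • q = (cc.sum fun i a => a • s i) • q := by rw [hcc]
      _ = ∑ i ∈ cc.support, (cc i • s i) • q := by rw [Finsupp.sum, Finset.sum_smul]
      _ = ∑ i ∈ cc.support, s i • (cc i • q) := by
            refine Finset.sum_congr rfl (fun i _ => ?_)
            rw [smul_eq_mul, mul_smul, smul_comm]
      _ = ∑ i, s i • (cc i • q) := by
            refine Finset.sum_subset (Finset.subset_univ cc.support) ?_
            intro i _ hi
            rw [Finsupp.notMem_support_iff.mp hi]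
            simp
  · rintro x y ⟨c, hc, rfl⟩ ⟨d, hd, rfl⟩
    exact ⟨fun i => c i + d i, fun i => Q.add_mem (hc i) (hd i), by
      rw [← Finset.sum_add_distrib]
      apply Finset.sum_congr rfl
      intro i _
      rw [smul_add]⟩

/-- Key expansion: every element of the adic completion can be written as
`of a + ∑ i, s i • y i`. -/
lemma exists_expansion {k : ℕ} {s : Fin k → R} (hsI : Ideal.span (Set.range s) = I)
    (M : Type) [AddCommGroup M] [Module R M] (x : AdicCompletion I M) :
    ∃ (a : M) (y : Fin k → AdicCompletion I M),
      x = AdicCompletion.of I M a + ∑ i, s i • y i := by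
  refine AdicCompletion.induction_on I M x
    (p := fun z => ∃ (a : M) (y : Fin k → AdicCompletion I M), z = AdicCompletion.of I M a + ∑ i, s i • y i) (fun f => ?_)
  -- the cauchy differences
  have hdiff : ∀ l : ℕ, (f.val (l + 2) - f.val (l + 1)) ∈ I • (I ^ l • ⊤ : Submodule R M) := by
    intro l
    have h1 : f.val (l + 1) ≡ f.val (l + 2) [SMOD (I ^ (l+1) • ⊤ : Submodule R M)] :=
      f.property (Nat.le_succ (l + 1))
    have h2 : f.val (l + 2) - f.val (l + 1) ∈ (I ^ (l + 1) • ⊤ : Submodule R M) :=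
      (SModEq.sub_mem).mp h1.symm
    have h3 : (I ^ (l + 1) • ⊤ : Submodule R M) = I • (I ^ l • ⊤ : Submodule R M) := by
      rw [pow_succ', ← Submodule.smul_assoc]
      rfl
    rwa [h3] at h2
  choose c hcmem hc using fun l => span_smul_expand I hsI (hdiff l)
  -- partial sums
  set b : Fin k → ℕ → M := fun i n => ∑ l ∈ Finset.range n, c l i with hb
  have hbc : ∀ i, ∀ n, b i n ≡ b i (n + 1) [SMOD (I ^ n • ⊤ : Submodule R M)] := by
    intro i n
    rw [SModEq.sub_mem]
    have : b i n - b i (n + 1) = -(c n i) := by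
      rw [hb]
      simp only
      rw [Finset.sum_range_succ]
      abel
    rw [this]
    exact Submodule.neg_mem _ (hcmem n i)
  refine ⟨f.val 1, fun i => AdicCompletion.mk I M (AdicCauchySequence.mk I M (b i) (hbc i)), ?_⟩
  apply AdicCompletion.ext
  intro n
  match n with
  | 0 =>
    haveI : Subsingleton (M ⧸ (I ^ 0 • ⊤ : Submodule R M)) := by
      rw [Submodule.Quotient.subsingleton_iff]
      simp
    exact Subsingleton.elim _ _
  | Nat.succ m =>
    set n := m + 1
    have hsum : ∑ i, s i • b i n = f.val (n + 1) - f.val 1 := by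
      rw [hb]
      simp only [Finset.smul_sum]
      rw [Finset.sum_comm]
      have : ∀ l ∈ Finset.range n, ∑ i, s i • c l i = f.val (l + 2) - f.val (l + 1) :=
        fun l _ => (hc l).symm
      rw [Finset.sum_congr rfl this]
      have := Finset.sum_range_sub (fun l => f.val (l + 1)) n
      simpa using this
    have hrhs : (AdicCompletion.of I M (f.val 1) +
        ∑ i, s i • AdicCompletion.mk I M (AdicCauchySequence.mk I M (b i) (hbc i))).val n =
        Submodule.mkQ (I ^ n • ⊤ : Submodule R M) (f.val (n + 1)) := by
      rw [val_add_apply, val_sum_apply, of_apply]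
      have : ∀ i : Fin k, (s i • AdicCompletion.mk I M (AdicCauchySequence.mk I M (b i) (hbc i))).val n
          = Submodule.mkQ (I ^ n • ⊤ : Submodule R M) (s i • b i n) := by
        intro i
        rw [val_smul_apply, AdicCompletion.mk_apply_coe]
        simp only [AdicCauchySequence.mk_coe]
        rw [map_smul]
      rw [Finset.sum_congr rfl (fun i _ => this i), ← map_sum, ← map_add, hsum]
      congr 1
      abel
    rw [hrhs, AdicCompletion.mk_apply_coe]
    exact (AdicCauchySequence.mk_eq_mk (Nat.le_succ n) f).symm

end B

section C
variable {R : Type} [CommRing R] {s : R}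
variable {N : Type} [AddCommGroup N] [Module R N]


/-- The summation operator `p ↦ "∑ j, s^j • p j"` associated to an `s`-contramodule. -/
def Ssum (hc : Contra R s N) : (ℕ → N) →ₗ[R] N :=
  (LinearMap.proj 0) ∘ₗ (LinearEquiv.ofBijective (Tmap R s N) hc).symm.toLinearMap

lemma Ssum_shift (hc : Contra R s N) (p : ℕ → N) :
    Ssum hc p = p 0 + s • Ssum hc (fun j => p (j + 1)) := by
  set E := LinearEquiv.ofBijective (Tmap R s N) hc with hE
  set c := E.symm p with hcdef
  have hTc : Tmap R s N c = p := by
    have : E c = p := by rw [hcdef]; exact E.apply_symm_apply p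
    exact this
  have h0 : c 0 - s • c 1 = p 0 := by
    have := congrFun hTc 0
    simpa [Tmap_apply] using this
  have hshift : E.symm (fun j => p (j + 1)) = fun j => c (j + 1) := by
    apply E.injective
    rw [E.apply_symm_apply]
    have : E (fun j => c (j + 1)) = Tmap R s N (fun j => c (j + 1)) := rfl
    rw [this]
    funext j
    simp only [Tmap_apply]
    exact (congrFun hTc (j + 1)).symm
  have hS : ∀ q : ℕ → N, Ssum hc q = E.symm q 0 := fun q => rfl
  rw [hS, hS, hshift, ← h0, hcdef]
  abel

section Gaux

variable {k : ℕ}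

/-- Iterated summation over runs of the last letter. -/
def Gaux (S : (ℕ → N) → N) (n : List (Fin (k + 1)) → N) :
    List (Fin k) → List (Fin (k + 1)) → N
  | [], v => n v
  | i :: u, v => S fun j => Gaux S n u (List.replicate j (Fin.last k) ++ i.castSucc :: v)

lemma Gaux_rel (S : (ℕ → N) →ₗ[R] N) (sc : Fin (k + 1) → R) (n : List (Fin (k + 1)) → N)
    (hrel : ∀ v, n v = ∑ i, sc i • n (v ++ [i])) :
    ∀ (u : List (Fin k)) (v : List (Fin (k + 1))),
      Gaux ⇑S n u v = ∑ i, sc i • Gaux ⇑S n u (v ++ [i]) := by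
  intro u
  induction u with
  | nil => exact fun v => hrel v
  | cons i₀ u ih =>
    intro v
    show S _ = _
    have hpt : (fun j => Gaux ⇑S n u (List.replicate j (Fin.last k) ++ i₀.castSucc :: v)) =
        ∑ i : Fin (k + 1), sc i •
          (fun j => Gaux ⇑S n u (List.replicate j (Fin.last k) ++ i₀.castSucc :: (v ++ [i]))) := by
      funext j
      rw [Finset.sum_apply]
      have := ih (List.replicate j (Fin.last k) ++ i₀.castSucc :: v)
      rw [this]
      refine Finset.sum_congr rfl (fun i _ => ?_)
      simp only [Pi.smul_apply]
      congr 2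
      simp
    rw [hpt, map_sum]
    refine Finset.sum_congr rfl (fun i _ => ?_)
    rw [map_smul]
    rfl

lemma Gaux_nil (hc : Contra R s N) (sc : Fin (k + 1) → R) (hlast : sc (Fin.last k) = s)
    (n : List (Fin (k + 1)) → N)
    (hrel : ∀ v, n v = ∑ i, sc i • n (v ++ [i])) (u : List (Fin k)) :
    Gaux ⇑(Ssum hc) n u [] = ∑ i : Fin k, sc i.castSucc • Gaux ⇑(Ssum hc) n (i :: u) [] := by
  set S := Ssum hc with hSdef
  set p : ℕ → N := fun j => Gaux ⇑S n u (List.replicate j (Fin.last k)) with hp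
  have h1 : S p = p 0 + s • S (fun j => p (j + 1)) := Ssum_shift hc p
  have h2 : p = (fun j => (∑ i : Fin k, sc i.castSucc •
        Gaux ⇑S n u (List.replicate j (Fin.last k) ++ [i.castSucc])) +
        s • p (j + 1)) := by
    funext j
    rw [hp]
    simp only
    rw [Gaux_rel S sc n hrel u (List.replicate j (Fin.last k))]
    rw [Fin.sum_univ_castSucc]
    congr 1
    rw [hlast]
    congr 1
    rw [← List.replicate_succ' ]
  have h3 : S p = (∑ i : Fin k, sc i.castSucc • S (fun j =>
      Gaux ⇑S n u (List.replicate j (Fin.last k) ++ [i.castSucc]))) + s • S (fun j => p (j + 1)) := by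
    conv_lhs => rw [h2]
    have : (fun j => (∑ i : Fin k, sc i.castSucc •
        Gaux ⇑S n u (List.replicate j (Fin.last k) ++ [i.castSucc])) + s • p (j + 1)) =
        (∑ i : Fin k, sc i.castSucc • (fun j =>
          Gaux ⇑S n u (List.replicate j (Fin.last k) ++ [i.castSucc]))) + s • (fun j => p (j + 1)) := by
      funext j
      simp [Finset.sum_apply]
    rw [this, map_add, map_smul, map_sum]
    congr 1
    refine Finset.sum_congr rfl (fun i _ => ?_)
    rw [map_smul]
  have h4 : p 0 = ∑ i : Fin k, sc i.castSucc • S (fun j =>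
      Gaux ⇑S n u (List.replicate j (Fin.last k) ++ [i.castSucc])) := by
    have := h1.symm.trans h3
    exact add_right_cancel this
  have h5 : ∀ i : Fin k, Gaux ⇑S n (i :: u) [] =
      S (fun j => Gaux ⇑S n u (List.replicate j (Fin.last k) ++ [i.castSucc])) := by
    intro i
    rfl
  rw [hp] at h4
  simp only at h4
  rw [show Gaux ⇑S n u [] = Gaux ⇑S n u (List.replicate 0 (Fin.last k)) from rfl]
  rw [h4]
  exact Finset.sum_congr rfl (fun i _ => by rw [h5])

end Gaux

/-- The key combinatorial lemma: a "tree family" over generators in a module that is a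
contramodule for each generator vanishes. -/
lemma claimT_append : ∀ (k : ℕ) (sc : Fin k → R) (_ : ∀ i, Contra R (sc i) N)
    (n : List (Fin k) → N) (_ : ∀ v, n v = ∑ i, sc i • n (v ++ [i])), n [] = 0 := by
  intro k
  induction k with
  | zero =>
    intro sc hc n hrel
    simpa using hrel []
  | succ k ih =>
    intro sc hc n hrel
    have hlast : sc (Fin.last k) = sc (Fin.last k) := rfl
    set S := Ssum (hc (Fin.last k)) with hS
    have key := Gaux_nil (hc (Fin.last k)) sc rfl n hrel
    set ntil : List (Fin k) → N := fun v => Gaux ⇑S n v.reverse [] with hntil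
    have hrel' : ∀ v, ntil v = ∑ i, sc i.castSucc • ntil (v ++ [i]) := by
      intro v
      rw [hntil]
      simp only
      rw [key v.reverse]
      refine Finset.sum_congr rfl (fun i _ => ?_)
      congr 1
      rw [List.reverse_append, List.reverse_singleton]
      rfl
    have := ih (fun i => sc i.castSucc) (fun i => hc i.castSucc) ntil hrel'
    rw [hntil] at this
    simpa [Gaux] using this

lemma claimT {k : ℕ} (sc : Fin k → R) (hc : ∀ i, Contra R (sc i) N)
    (n : List (Fin k) → N) (hrel : ∀ u, n u = ∑ i, sc i • n (i :: u)) : n [] = 0 := by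
  have := claimT_append k sc hc (fun v => n v.reverse) ?_
  · simpa using this
  · intro v
    rw [hrel v.reverse]
    refine Finset.sum_congr rfl (fun i _ => ?_)
    congr 1
    rw [List.reverse_append, List.reverse_singleton]
    rfl

end C

section DE
variable {R : Type} [CommRing R] (I : Ideal R)

/-- Uniqueness: a linear map from an adic completion into a contramodule (for a generating
family of `I`) vanishing on the image of `of` is zero. -/
lemma inj_of_contra {k : ℕ} {s : Fin k → R} (hsI : Ideal.span (Set.range s) = I)
    {M : Type} [AddCommGroup M] [Module R M] {N : Type} [AddCommGroup N] [Module R N]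
    (hc : ∀ i, Contra R (s i) N)
    (h : AdicCompletion I M →ₗ[R] N) (hof : ∀ m, h (AdicCompletion.of I M m) = 0) :
    h = 0 := by
  apply LinearMap.ext
  intro x
  choose A Y hAY using exists_expansion I hsI M
  set X : List (Fin k) → AdicCompletion I M :=
    fun u => u.foldr (fun i z => Y z i) x with hX
  have hn : ∀ u, h (X u) = ∑ i, s i • h (X (i :: u)) := by
    intro u
    conv_lhs => rw [show X u = AdicCompletion.of I M (A (X u)) + ∑ i, s i • Y (X u) i
      from hAY (X u)]
    rw [map_add, hof, map_sum, zero_add]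
    refine Finset.sum_congr rfl (fun i _ => ?_)
    rw [map_smul]
    rfl
  have := claimT s hc (fun u => h (X u)) hn
  simpa [hX] using this

variable {G : Type} [AddCommGroup G] [Module R G] {M : Type} [AddCommGroup M] [Module R M]

lemma extMap_ker (ψ : G →ₗ[R] AdicCompletion I M) (n : ℕ) :
    (I ^ n • ⊤ : Submodule R G) ≤ LinearMap.ker ((eval I M n) ∘ₗ ψ) := by
  intro g hg
  refine Submodule.smul_induction_on hg ?_ ?_
  · intro r hr g' _
    rw [LinearMap.mem_ker, LinearMap.comp_apply, map_smul, map_smul]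
    exact smul_quot_zero I hr _
  · intro g₁ g₂ hg₁ hg₂
    rw [LinearMap.mem_ker, map_add]
    rw [LinearMap.mem_ker] at hg₁ hg₂
    rw [hg₁, hg₂, add_zero]

/-- Canonical extension of a map `G → AdicCompletion I M` to the completion of `G`. -/
def extMap (ψ : G →ₗ[R] AdicCompletion I M) :
    AdicCompletion I G →ₗ[R] AdicCompletion I M :=
  AdicCompletion.lift I
    (fun n => (Submodule.liftQ _ ((eval I M n) ∘ₗ ψ) (extMap_ker I ψ n)) ∘ₗ eval I G n)
    (by
      intro m n hmn
      apply LinearMap.ext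
      intro x
      simp only [LinearMap.comp_apply]
      obtain ⟨g, hg⟩ := Submodule.Quotient.mk_surjective _ (eval I G n x)
      have hm : eval I G m x = Submodule.Quotient.mk g := by
        rw [show eval I G m x = AdicCompletion.transitionMap I G hmn (eval I G n x) from
          (transitionMap_comp_eval_apply I G hmn x).symm, ← hg, ← Submodule.mkQ_apply, Submodule.factor_mk, Submodule.mkQ_apply]
      rw [← hg, hm, Submodule.liftQ_apply, Submodule.liftQ_apply, LinearMap.comp_apply,
        LinearMap.comp_apply]
      exact transitionMap_comp_eval_apply I M hmn (ψ g))

lemma extMap_of (ψ : G →ₗ[R] AdicCompletion I M) (g : G) :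
    extMap I ψ (AdicCompletion.of I G g) = ψ g := by
  apply AdicCompletion.ext
  intro n
  have h0 : (extMap I ψ (AdicCompletion.of I G g)).val n =
      ((Submodule.liftQ _ ((eval I M n) ∘ₗ ψ) (extMap_ker I ψ n)) ∘ₗ eval I G n)
        (AdicCompletion.of I G g) := rfl
  rw [h0]
  simp only [LinearMap.comp_apply]
  rw [show eval I G n (AdicCompletion.of I G g) = Submodule.Quotient.mk g from rfl,
    Submodule.liftQ_apply]
  rfl

end DE
end LCAux


/-! ## STATEMENT 1 -/

open LComplete

open LCAux

/-- For every `R`-module `M`, the module `L_0^I M` is `L_0^I`-complete, and for every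
`L_0^I`-complete `R`-module `N`, precomposition with `η_M : M → L_0^I M` gives a
bijection `Hom_R(L_0^I M, N) ≅ Hom_R(M, N)`; that is, `L_0^I` is left adjoint to the
inclusion of the full subcategory of `L_0^I`-complete modules. -/
theorem statement1 {R : Type} [CommRing R] (I : Ideal R) (hI : I.FG)
    (M : Type) [AddCommGroup M] [Module R M] :
    IsL0Complete I (L0 I M) ∧
    (∀ (N : Type) [AddCommGroup N] [Module R N], IsL0Complete I N →
      Function.Bijective (fun g : L0 I M →ₗ[R] N => g ∘ₗ eta I M)) := by
  obtain ⟨k, s, hs⟩ := Submodule.fg_iff_exists_fin_generating_family.mp hI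
  have hsmem : ∀ i, s i ∈ I := by
    intro i
    rw [← hs]
    exact Ideal.subset_span ⟨i, rfl⟩
  have contraL0 : ∀ (P : Type) [AddCommGroup P] [Module R P],
      ∀ i, Contra R (s i) (L0 I P) := by
    intro P _ _ i
    exact contra_quot_range ((AdicCompletion.map I (d1 R P)).restrictScalars R)
      (contra_completion I (hsmem i) _) (contra_completion I (hsmem i) _)
  have uniq : ∀ (P : Type) [AddCommGroup P] [Module R P]
      (N : Type) [AddCommGroup N] [Module R N], (∀ i, Contra R (s i) N) →
      ∀ g : L0 I P →ₗ[R] N, g ∘ₗ eta I P = 0 → g = 0 := by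
    intro P _ _ N _ _ hcN g hg
    have h0 : (g ∘ₗ (L0aux I P).mkQ) ∘ₗ AdicCompletion.of I (P →₀ R) = 0 := by
      apply Finsupp.lhom_ext
      intro x r
      have h1 : (Finsupp.single x r : P →₀ R) = r • Finsupp.single x 1 := by
        rw [Finsupp.smul_single, smul_eq_mul, mul_one]
      simp only [LinearMap.comp_apply, h1, map_smul, LinearMap.zero_apply]
      have h3 := LinearMap.congr_fun hg x
      simp only [LinearMap.comp_apply, LinearMap.zero_apply] at h3
      have h4 : g ((L0aux I P).mkQ ((AdicCompletion.of I (P →₀ R)) (Finsupp.single x 1))) = 0 := h3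
      exact congrArg (fun z => r • z) h4
    have hz := inj_of_contra I hs hcN (g ∘ₗ (L0aux I P).mkQ)
      (fun m => LinearMap.congr_fun h0 m)
    apply Submodule.linearMap_qext
    exact hz.trans (LinearMap.zero_comp _).symm
  have partA : ∀ (P : Type) [AddCommGroup P] [Module R P],
      Function.Bijective (eta I (L0 I P)) := by
    intro P _ _
    choose w hw using fun x : (L0 I P) => Submodule.Quotient.mk_surjective (L0aux I P) x
    set ψ : ((L0 I P) →₀ R) →ₗ[R] AdicCompletion I (P →₀ R) := Finsupp.linearCombination R w with hψdef
    have hψc : (L0aux I P).mkQ ∘ₗ ψ = eps R (L0 I P) := by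
      apply Finsupp.lhom_ext
      intro a b
      simp only [LinearMap.comp_apply, hψdef, Finsupp.linearCombination_single, map_smul,
        Submodule.mkQ_apply, hw a]
      have hrhs : (Finsupp.linearCombination R (id : L0 I P → L0 I P)) (Finsupp.single a b)
          = b • a := by
        rw [Finsupp.linearCombination_single]
        rfl
      exact hrhs.symm
    set Φ : AdicCompletion I ((L0 I P) →₀ R) →ₗ[R] (L0 I P) := (L0aux I P).mkQ ∘ₗ extMap I ψ with hΦdef
    have hΦof : ∀ z, Φ (AdicCompletion.of I ((L0 I P) →₀ R) z) = eps R (L0 I P) z := by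
      intro z
      rw [hΦdef]
      change (L0aux I P).mkQ (extMap I ψ (AdicCompletion.of I _ z)) = _
      rw [extMap_of]
      exact LinearMap.congr_fun hψc z
    have hkillc : Φ ∘ₗ ((AdicCompletion.map I (d1 R (L0 I P))).restrictScalars R) = 0 := by
      apply inj_of_contra I hs (contraL0 P)
      intro m
      rw [LinearMap.comp_apply, LinearMap.coe_restrictScalars, LComplete.map_of I (d1 R (L0 I P)) m, hΦof]
      exact LinearMap.congr_fun (eps_comp_d1 (L0 I P)) m
    have hkill : ∀ w' ∈ L0aux I (L0 I P), w' ∈ LinearMap.ker Φ := by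
      rintro w' ⟨z, rfl⟩
      rw [LinearMap.mem_ker]
      exact LinearMap.congr_fun hkillc z
    set g : L0 I (L0 I P) →ₗ[R] (L0 I P) := Submodule.liftQ (L0aux I (L0 I P)) Φ hkill with hgdef
    have hgη : ∀ x : (L0 I P), g (eta I (L0 I P) x) = x := by
      intro x
      have h2 : g (eta I (L0 I P) x) = Φ (AdicCompletion.of I ((L0 I P) →₀ R) (Finsupp.single x 1)) := rfl
      rw [h2, hΦof]
      simp only [eps, Finsupp.linearCombination_single, id_eq, one_smul]
    have hηg : (eta I (L0 I P)) ∘ₗ g = LinearMap.id := by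
      have hδ := uniq (L0 I P) (L0 I (L0 I P)) (contraL0 (L0 I P)) ((eta I (L0 I P)) ∘ₗ g - LinearMap.id) ?_
      · rwa [sub_eq_zero] at hδ
      · apply LinearMap.ext
        intro x
        simp only [LinearMap.sub_comp, LinearMap.sub_apply, LinearMap.comp_apply,
          LinearMap.id_comp, LinearMap.zero_apply]
        rw [hgη x, sub_self]
    constructor
    · exact Function.LeftInverse.injective hgη
    · intro z
      exact ⟨g z, LinearMap.congr_fun hηg z⟩
  refine ⟨partA M, ?_⟩
  intro N _ _ hN
  set e : N ≃ₗ[R] L0 I N := LinearEquiv.ofBijective (eta I N) hN with he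
  have hcN : ∀ i, Contra R (s i) N := fun i => contra_of_equiv e.symm (contraL0 N i)
  constructor
  · intro g₁ g₂ hg
    simp only at hg
    have hδ : (g₁ - g₂) ∘ₗ eta I M = 0 := by rw [LinearMap.sub_comp, hg, sub_self]
    have := uniq M N hcN _ hδ
    rwa [sub_eq_zero] at this
  · intro f
    refine ⟨(e.symm : L0 I N →ₗ[R] N) ∘ₗ L0map I f, ?_⟩
    simp only
    apply LinearMap.ext
    intro x
    have hnat := LinearMap.congr_fun (eta_naturality I f) x
    simp only [LinearMap.comp_apply] at hnat ⊢
    rw [← hnat]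
    have hE : eta I N (f x) = e (f x) := by rw [he]; rfl
    rw [hE]
    exact e.symm_apply_apply (f x)
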